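/- arXiv:2206.04260 — 5 statements merged into one kernel-verified Lean document; each statement's English description precedes it below -/
import Mathlib

section
/- For any a, b ≥ 2, any configuration (a 2-coloring of the complete 3-uniform hypergraph on a linearly ordered finite vertex set, with colors 'cap' and 'cup') of size greater than C(a+b-4, a-2) contains an a-cap or a b-cup, where an a-cap (resp. a-cup) is a set of a vertices x_1 < ... < x_a such that every three consecutive vertices are colored cap (resp. cup). -/
variable {α : Type*} [LinearOrder α]

/-- Every consecutive triple of the list satisfies `f`. -/
def Triples (f : α → α → α → Prop) : List α → Prop
  | x :: y :: z :: l => f x y z ∧ Triples f (y :: z :: l)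
  | _ => True

/-- `l` is a cup in the configuration `(S, cup)`: a nonempty increasing list of
vertices of `S` all of whose consecutive triples are colored cup. -/
def IsCupIn (S : Finset α) (cup : α → α → α → Prop) (l : List α) : Prop :=
  l ≠ [] ∧ l.Chain' (· < ·) ∧ (∀ x ∈ l, x ∈ S) ∧ Triples cup l

/-- `l` is a cap in the configuration `(S, cup)`. -/
def IsCapIn (S : Finset α) (cup : α → α → α → Prop) (l : List α) : Prop :=
  l ≠ [] ∧ l.Chain' (· < ·) ∧ (∀ x ∈ l, x ∈ S) ∧ Triples (fun x y z => ¬ cup x y z) l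

/-- The configuration has no cap with `a` (or more) vertices. -/
def CapFree (S : Finset α) (cup : α → α → α → Prop) (a : ℕ) : Prop :=
  ∀ l : List α, IsCapIn S cup l → l.length < a

/-- The configuration has no cup with `b` (or more) vertices. -/
def CupFree (S : Finset α) (cup : α → α → α → Prop) (b : ℕ) : Prop :=
  ∀ l : List α, IsCupIn S cup l → l.length < b

def StartsAt (l : List α) (p : α) : Prop := l.head? = some p

def EndsAt (l : List α) (p : α) : Prop := l.getLast? = some p

/-- A weak `(a, b)`-gon: an `a`-cap and a `b`-cup sharing both endpoints. -/
def HasWeakGon (S : Finset α) (cup : α → α → α → Prop) (a b : ℕ) : Prop :=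
  ∃ (A U : List α) (x y : α), IsCapIn S cup A ∧ A.length = a ∧
    IsCupIn S cup U ∧ U.length = b ∧
    StartsAt A x ∧ StartsAt U x ∧ EndsAt A y ∧ EndsAt U y

/-- Two cups from `p` to `r` and from `q` to `s` are interweaved if `p < q ≤ r < s`. -/
def Interweaved (C₁ C₂ : List α) : Prop :=
  ∃ p r q s, StartsAt C₁ p ∧ EndsAt C₁ r ∧ StartsAt C₂ q ∧ EndsAt C₂ s ∧
    p < q ∧ q ≤ r ∧ r < s

/-- A laced `(n-1)`-cup: an `(n-1)`-cup from `p` to `q` together with a cup ending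
at `p` and a cup starting at `q` whose sizes sum to `n - 1`. -/
def IsLacedCup (S : Finset α) (cup : α → α → α → Prop) (n : ℕ) (C : List α) : Prop :=
  IsCupIn S cup C ∧ C.length = n - 1 ∧
  ∃ p q Cp Cq, StartsAt C p ∧ EndsAt C q ∧ IsCupIn S cup Cp ∧ IsCupIn S cup Cq ∧
    EndsAt Cp p ∧ StartsAt Cq q ∧ Cp.length + Cq.length = n - 1

/-- A slope labeling of an `a`-cap-free configuration: labels in `{1, …, a-2}`
such that `s x y ≤ s y z` forces `x y z` to be a cup. -/
def IsSlopeLabeling (S : Finset α) (cup : α → α → α → Prop) (a : ℕ) (s : α → α → ℕ) : Prop :=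
  (∀ x ∈ S, ∀ y ∈ S, x < y → 1 ≤ s x y ∧ s x y ≤ a - 2) ∧
  (∀ x ∈ S, ∀ y ∈ S, ∀ z ∈ S, x < y → y < z → s x y ≤ s y z → cup x y z)

/-- `α_i(p)`: maximum length of a cup ending at `p` with last edge of label `≤ i`
(`1` if there is no such cup). -/
noncomputable def alphaStat (S : Finset α) (cup : α → α → α → Prop) (s : α → α → ℕ)
    (i : ℕ) (p : α) : ℕ :=
  max 1 (sSup {k | ∃ (l : List α) (x : α), IsCupIn S cup l ∧ EndsAt l p ∧
    l.length = k ∧ l.dropLast.getLast? = some x ∧ s x p ≤ i})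

/-- `β(p)`: maximum length of a cup ending at `p` (`1` if there is none). -/
noncomputable def betaStat (S : Finset α) (cup : α → α → α → Prop) (p : α) : ℕ :=
  max 1 (sSup {k | ∃ l : List α, IsCupIn S cup l ∧ EndsAt l p ∧ l.length = k})

/-- The cup coloring of the mirror reflection. -/
def opCup (cup : α → α → α → Prop) : αᵒᵈ → αᵒᵈ → αᵒᵈ → Prop :=
  fun x y z => cup (OrderDual.ofDual z) (OrderDual.ofDual y) (OrderDual.ofDual x)

/-- The vertex set of the mirror reflection. -/
def opSet (S : Finset α) : Finset αᵒᵈ := S.map OrderDual.toDual.toEmbedding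

/-- The mirror reflection of a cap/cup. -/
def opList (l : List α) : List αᵒᵈ := (l.map OrderDual.toDual).reverse

/-
Erdős–Szekeres cups-caps argument, by induction on `a + b`. Let `T ⊆ S` be the set of points at
which an `(a-1)`-cap starts. The first point of any `(a-1)`-cap lies in `T`, so `S \ T` has no
`(a-1)`-cap, and induction (with `a - 1, b`) bounds `#(S \ T)` by `C(a+b-5, a-3)` unless a
`b`-cup is found. By Pascal's rule `#T > C(a+b-5, a-2)`, so induction (with `a, b - 1`) gives an
`a`-cap or a `(b-1)`-cup in `T`. In the latter case, let `x q` be the last two points of the cup and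
`q y` the first two of an `(a-1)`-cap starting at `q`: if `x q y` is a cup it extends the cup by
`y`, and otherwise it extends the cap by `x`.
-/

open Finset

theorem Finset.exists_lt_of_one_lt_card {β : Type*} [LinearOrder β] {s : Finset β} (hs : 1 < #s) :
    ∃ x ∈ s, ∃ y ∈ s, x < y :=
  ⟨_, min'_mem _ _, _, max'_mem _ _, min'_lt_max'_of_card s hs⟩

theorem Triples.concat {β : Type*} {f : β → β → β → Prop} :
    ∀ {l : List β} {x y z : β}, Triples f (l ++ [x, y]) → f x y z → Triples f (l ++ [x, y, z])
  | [], _, _, _, _, h => ⟨h, trivial⟩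
  | [_], _, _, _, ⟨h₁, _⟩, h => ⟨h₁, h, trivial⟩
  | [_, _], _, _, _, ⟨h₁, h₂, _⟩, h => ⟨h₁, h₂, h, trivial⟩
  | _ :: v :: w :: l, _, _, _, ⟨h₁, h₂⟩, h => ⟨h₁, Triples.concat (l := v :: w :: l) h₂ h⟩

theorem List.exists_eq_append_pair {β : Type*} {l : List β} {n : ℕ} (h : l.length = n + 2) :
    ∃ m x y, l = m ++ [x, y] := by
  rcases hr : l.reverse with _ | ⟨y, _ | ⟨x, m⟩⟩ <;>
    have hlen := congrArg List.length hr <;> simp only [List.length_reverse, h] at hlen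
  · simp at hlen
  · simp at hlen
  · exact ⟨m.reverse, x, y, by simpa using congrArg List.reverse hr⟩

section Configuration

variable {S : Finset α} {cup : α → α → α → Prop}

theorem IsCupIn.mono {S' : Finset α} {l : List α} (h : IsCupIn S cup l) (hS : S ⊆ S') :
    IsCupIn S' cup l :=
  ⟨h.1, h.2.1, fun x hx => hS (h.2.2.1 x hx), h.2.2.2⟩

theorem IsCapIn.mono {S' : Finset α} {l : List α} (h : IsCapIn S cup l) (hS : S ⊆ S') :
    IsCapIn S' cup l :=
  ⟨h.1, h.2.1, fun x hx => hS (h.2.2.1 x hx), h.2.2.2⟩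

theorem isCupIn_pair {x y : α} (hx : x ∈ S) (hy : y ∈ S) (hxy : x < y) :
    IsCupIn S cup [x, y] :=
  ⟨List.cons_ne_nil _ _, List.isChain_pair.mpr hxy, by simp [hx, hy], trivial⟩

theorem isCapIn_pair {x y : α} (hx : x ∈ S) (hy : y ∈ S) (hxy : x < y) :
    IsCapIn S cup [x, y] :=
  isCupIn_pair (cup := fun x y z => ¬ cup x y z) hx hy hxy

theorem IsCupIn.concat {l : List α} {x y z : α} (h : IsCupIn S cup (l ++ [x, y])) (hz : z ∈ S)
    (hyz : y < z) (hxyz : cup x y z) : IsCupIn S cup (l ++ [x, y, z]) := by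
  refine ⟨by simp, ?_, ?_, h.2.2.2.concat hxyz⟩
  · show List.IsChain _ _
    have : List.IsChain (· < ·) ((l ++ [x, y]) ++ [z]) :=
      h.2.1.append (List.isChain_singleton z) (by simpa using hyz)
    simpa only [List.append_assoc, List.cons_append, List.nil_append] using this
  · have := h.2.2.1
    grind

theorem IsCapIn.cons {l : List α} {x y z : α} (h : IsCapIn S cup (y :: z :: l)) (hx : x ∈ S)
    (hxy : x < y) (hxyz : ¬ cup x y z) : IsCapIn S cup (x :: y :: z :: l) := by
  refine ⟨List.cons_ne_nil _ _, h.2.1.cons_cons hxy, ?_, hxyz, h.2.2.2⟩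
  have := h.2.2.1
  grind

theorem isCapIn_cons_or_isCupIn_concat {l m : List α} {x q y : α}
    (hcup : IsCupIn S cup (l ++ [x, q])) (hcap : IsCapIn S cup (q :: y :: m)) :
    IsCapIn S cup (x :: q :: y :: m) ∨ IsCupIn S cup (l ++ [x, q, y]) := by
  have hx : x ∈ S := hcup.2.2.1 x (by simp)
  have hy : y ∈ S := hcap.2.2.1 y (by simp)
  have hxq : x < q := (List.isChain_append_cons_cons.mp hcup.2.1).2.1
  by_cases hxqy : cup x q y
  · exact Or.inr (hcup.concat hy (List.rel_of_isChain_cons_cons hcap.2.1) hxqy)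
  · exact Or.inl (hcap.cons hx hxq hxqy)

def HasCapOrCup (S : Finset α) (cup : α → α → α → Prop) (a b : ℕ) : Prop :=
  (∃ l : List α, IsCapIn S cup l ∧ l.length = a) ∨ (∃ l : List α, IsCupIn S cup l ∧ l.length = b)

theorem HasCapOrCup.mono {S' : Finset α} {a b : ℕ} (h : HasCapOrCup S cup a b) (hS : S ⊆ S') :
    HasCapOrCup S' cup a b :=
  h.imp (fun ⟨l, hl, hlen⟩ => ⟨l, hl.mono hS, hlen⟩) (fun ⟨l, hl, hlen⟩ => ⟨l, hl.mono hS, hlen⟩)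

open scoped Classical in
noncomputable def capStarts (S : Finset α) (cup : α → α → α → Prop) (n : ℕ) : Finset α :=
  {p ∈ S | ∃ y m, IsCapIn S cup (p :: y :: m) ∧ m.length = n}

theorem capStarts_subset (n : ℕ) : capStarts S cup n ⊆ S := by
  classical
  exact filter_subset _ _

theorem exists_isCapIn_of_mem_capStarts {n : ℕ} {p : α} (hp : p ∈ capStarts S cup n) :
    ∃ y m, IsCapIn S cup (p :: y :: m) ∧ m.length = n := by
  classical
  exact (mem_filter.mp hp).2

theorem not_isCapIn_sdiff_capStarts (n : ℕ) {l : List α}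
    (hl : IsCapIn (S \ capStarts S cup n) cup l) : l.length ≠ n + 2 := by
  classical
  intro hlen
  rcases l with _ | ⟨p, _ | ⟨y, m⟩⟩
  · simp at hlen
  · simp at hlen
  · have hp := mem_sdiff.mp (hl.2.2.1 p (by simp))
    exact hp.2 (mem_filter.mpr ⟨hp.1, y, m, hl.mono sdiff_subset, by simpa using hlen⟩)

theorem hasCapOrCup_of_choose_lt_card :
    ∀ (i j : ℕ) (S : Finset α), (i + j).choose i < #S → HasCapOrCup S cup (i + 2) (j + 2)
  | 0, _, S, hS => by
    obtain ⟨x, hx, y, hy, h⟩ := exists_lt_of_one_lt_card (by simpa using hS)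
    exact Or.inl ⟨_, isCapIn_pair hx hy h, rfl⟩
  | _ + 1, 0, S, hS => by
    obtain ⟨x, hx, y, hy, h⟩ := exists_lt_of_one_lt_card (by simpa using hS)
    exact Or.inr ⟨_, isCupIn_pair hx hy h, rfl⟩
  | i + 1, j + 1, S, hS => by
    set T := capStarts S cup i
    have hT : T ⊆ S := capStarts_subset i
    have hsplit : (i + j + 1).choose i < #(S \ T) ∨ (i + j + 1).choose (i + 1) < #T := by
      have hpascal := Nat.choose_succ_succ' (i + j + 1) i
      have := card_sdiff_add_card_eq_card hT
      rw [show i + 1 + (j + 1) = i + j + 1 + 1 by omega] at hS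
      omega
    rcases hsplit with hrest | hstarts
    · rcases hasCapOrCup_of_choose_lt_card i (j + 1) (S \ T) (by rwa [← Nat.add_assoc])
        with ⟨l, hl, hlen⟩ | hcup
      · exact absurd hlen (not_isCapIn_sdiff_capStarts i hl)
      · exact HasCapOrCup.mono (Or.inr hcup) sdiff_subset
    · rcases hasCapOrCup_of_choose_lt_card (i + 1) j T (by rwa [Nat.add_right_comm])
        with hcap | ⟨U, hU, hUlen⟩
      · exact HasCapOrCup.mono (Or.inl hcap) hT
      obtain ⟨l, x, q, rfl⟩ := List.exists_eq_append_pair hUlen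
      obtain ⟨y, m, hcap, hm⟩ := exists_isCapIn_of_mem_capStarts (hU.2.2.1 q (by simp))
      rcases isCapIn_cons_or_isCupIn_concat (hU.mono hT) hcap with h | h
      · exact Or.inl ⟨_, h, by simp [hm]⟩
      · exact Or.inr ⟨_, h, by simp at hUlen ⊢; omega⟩
termination_by i j => i + j

end Configuration

theorem stmt1 (a b : ℕ) (ha : 2 ≤ a) (hb : 2 ≤ b)
    (S : Finset α) (cup : α → α → α → Prop)
    (hcard : Nat.choose (a + b - 4) (a - 2) < S.card) :
    (∃ l : List α, IsCapIn S cup l ∧ l.length = a) ∨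
    (∃ l : List α, IsCupIn S cup l ∧ l.length = b) := by
  obtain ⟨i, rfl⟩ := Nat.exists_eq_add_of_le' ha
  obtain ⟨j, rfl⟩ := Nat.exists_eq_add_of_le' hb
  have hcard' : (i + j).choose i < #S := by
    rwa [show i + 2 + (j + 2) - 4 = i + j by omega, Nat.add_sub_cancel] at hcard
  exact hasCapOrCup_of_choose_lt_card i j S hcard'
end

section
/- In a 4-cap-free configuration with a slope labeling s taking values in {1,2}: for any edge pq of label 1 and any cup C starting at q, the sequence pC is a cup; and for any edge pq of label 2 and any cup C ending at p, the sequence Cq is a cup. -/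
variable {α : Type*} [LinearOrder α]

/-! Label 1 is the least and label 2 the greatest possible label, so by the slope condition
every triple `p q z` with `s p q = 1`, and every triple `x p q` with `s p q = 2`, is a cup.
Extending a cup at one end creates only one new consecutive triple, which is of this form. -/

section Triples

variable {β : Type*} {f : β → β → β → Prop}

theorem Triples.cons {x y : β} {l : List β} (h : Triples f (y :: l))
    (hf : ∀ z ∈ l.head?, f x y z) : Triples f (x :: y :: l) :=
  match l, h, hf with
  | [], _, _ => trivial
  | z :: _, h, hf => ⟨hf z rfl, h⟩

theorem Triples.concat_s7 {R : β → β → Prop} {p q : β} :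
    ∀ {l : List β}, l.IsChain R → Triples f l → l.getLast? = some p →
      (∀ x ∈ l, R x p → f x p q) → Triples f (l ++ [q])
  | [], _, _, _, _ => trivial
  | [_], _, _, _, _ => trivial
  | [x, y], hR, _, hp, hf => by
    obtain rfl : y = p := by simpa using hp
    exact ⟨hf x (by simp) (List.isChain_pair.mp hR), trivial⟩
  | x :: y :: z :: l, hR, ⟨hxyz, h⟩, hp, hf =>
    ⟨hxyz, Triples.concat_s7 (List.isChain_cons_cons.mp hR).2 h
      (by simpa [List.getLast?_cons_cons] using hp) fun w hw => hf w (by simp [hw])⟩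

end Triples

variable {S : Finset α} {cup : α → α → α → Prop}

theorem IsCupIn.cons {C : List α} {p q : α} (hC : IsCupIn S cup C) (hq : StartsAt C q)
    (hp : p ∈ S) (hpq : p < q) (hcup : ∀ z ∈ S, q < z → cup p q z) :
    IsCupIn S cup (p :: C) := by
  obtain ⟨-, hch, hmem, htr⟩ := hC
  obtain ⟨t, rfl⟩ : ∃ t, C = q :: t := List.head?_eq_some_iff.mp hq
  refine ⟨List.cons_ne_nil _ _, List.isChain_cons_cons.mpr ⟨hpq, hch⟩, ?_, htr.cons ?_⟩
  · simpa [hp] using hmem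
  · intro z hz
    obtain ⟨t', rfl⟩ : ∃ t', t = z :: t' := List.head?_eq_some_iff.mp hz
    exact hcup z (hmem z (by simp)) (List.isChain_cons_cons.mp hch).1

theorem IsCupIn.concat_s7 {C : List α} {p q : α} (hC : IsCupIn S cup C) (hp : EndsAt C p)
    (hq : q ∈ S) (hpq : p < q) (hcup : ∀ x ∈ S, x < p → cup x p q) :
    IsCupIn S cup (C ++ [q]) := by
  obtain ⟨-, hch, hmem, htr⟩ := hC
  refine ⟨by simp, List.isChain_append.mpr ⟨hch, List.isChain_singleton q, ?_⟩, ?_,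
    htr.concat_s7 hch hp fun x hx => hcup x (hmem x hx)⟩
  · rintro x hx y hy
    obtain rfl : p = x := by rwa [show C.getLast? = some p from hp, Option.mem_some_iff] at hx
    obtain rfl : q = y := by rwa [List.head?_singleton, Option.mem_some_iff] at hy
    exact hpq
  · intro x hx
    rcases List.mem_append.mp hx with hx | hx
    · exact hmem x hx
    · exact List.mem_singleton.mp hx ▸ hq

namespace IsSlopeLabeling

variable {a : ℕ} {s : α → α → ℕ}

theorem cup_of_label_eq_one (hs : IsSlopeLabeling S cup a s) {p q : α} (hp : p ∈ S)
    (hq : q ∈ S) (hpq : p < q) (h1 : s p q = 1) (z : α) (hz : z ∈ S) (hqz : q < z) :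
    cup p q z :=
  hs.2 p hp q hq z hz hpq hqz (h1 ▸ (hs.1 q hq z hz hqz).1)

theorem cup_of_label_eq_max (hs : IsSlopeLabeling S cup a s) {p q : α} (hp : p ∈ S)
    (hq : q ∈ S) (hpq : p < q) (hmax : s p q = a - 2) (x : α) (hx : x ∈ S) (hxp : x < p) :
    cup x p q :=
  hs.2 x hx p hp q hq hxp hpq (hmax ▸ (hs.1 x hx p hp hxp).2)

end IsSlopeLabeling

theorem stmt7_general (S : Finset α) (cup : α → α → α → Prop) (s : α → α → ℕ)
    (hs : IsSlopeLabeling S cup 4 s) :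
    (∀ p ∈ S, ∀ q ∈ S, p < q → s p q = 1 →
      ∀ C : List α, IsCupIn S cup C → StartsAt C q → IsCupIn S cup (p :: C)) ∧
    (∀ p ∈ S, ∀ q ∈ S, p < q → s p q = 2 →
      ∀ C : List α, IsCupIn S cup C → EndsAt C p → IsCupIn S cup (C ++ [q])) :=
  ⟨fun _ hp _ hq hpq h1 _ hC hstart =>
    hC.cons hstart hp hpq (hs.cup_of_label_eq_one hp hq hpq h1),
   fun _ hp _ hq hpq h2 _ hC hend =>
    hC.concat_s7 hend hq hpq (hs.cup_of_label_eq_max hp hq hpq h2)⟩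

theorem stmt7 (S : Finset α) (cup : α → α → α → Prop) (s : α → α → ℕ)
    (hfree : CapFree S cup 4) (hs : IsSlopeLabeling S cup 4 s) :
    (∀ p ∈ S, ∀ q ∈ S, p < q → s p q = 1 →
      ∀ C : List α, IsCupIn S cup C → StartsAt C q → IsCupIn S cup (p :: C)) ∧
    (∀ p ∈ S, ∀ q ∈ S, p < q → s p q = 2 →
      ∀ C : List α, IsCupIn S cup C → EndsAt C p → IsCupIn S cup (C ++ [q])) :=
  stmt7_general S cup s hs
end

section
/- Let S be a 4-cap-free, n-cup-free configuration with a slope labeling and define α(p) (resp. β(p)) as the maximum length of a cup ending at p with last edge labeled 1 (resp. ending at p with any last label), with value 1 if no such cup exists. Then for any two points p, q with β(p) = β(q), the edge between them has label 1, and p < q if and only if α(p) < α(q). Likewise, if α(p) = α(q), the edge between them has label 2, and p < q if and only if β(p) < β(q). -/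
variable {α : Type*} [LinearOrder α]

/-!
For `p < q` the edge `pq` has label `1` or `2`. A cup ending at `p` whose last edge has label at
most `s p q` stays a cup when continued by `q`, by the defining property of a slope labeling.
Continuing a longest cup ending at `p` shows that label `2` forces `β(p) < β(q)`, and continuing a
longest cup ending at `p` with last label `1` (or the edge `pq` itself) shows that label `1` forces
`α(p) < α(q)`. So equal `β` forces label `1` and increasing `α`, and equal `α` forces label `2`
and increasing `β`.
-/

theorem Triples.append_singleton {β : Type*} {f : β → β → β → Prop} {q : β} :
    ∀ l : List β, Triples f l →
      (∀ x y, l.dropLast.getLast? = some x → l.getLast? = some y → f x y q) →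
      Triples f (l ++ [q])
  | [], _, _ | [_], _, _ => trivial
  | [a, b], _, h => ⟨h a b rfl rfl, trivial⟩
  | a :: b :: c :: t, ⟨hf, ht⟩, h => by
      refine ⟨hf, Triples.append_singleton (b :: c :: t) ht fun x y hx hy => h x y ?_ ?_⟩
      · rcases t with _ | ⟨d, t⟩ <;> simpa using hx
      · simpa using hy

theorem List.IsChain.rel_dropLast_getLast {β : Type*} {R : β → β → Prop} {x p : β} :
    ∀ l : List β, l.IsChain R → l.dropLast.getLast? = some x → l.getLast? = some p → R x p
  | [], _, hx, _ | [_], _, hx, _ => by simp at hx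
  | [a, b], hc, hx, hp => by
      simp only [List.dropLast_cons_cons, List.dropLast_singleton, List.getLast?_singleton,
        Option.some.injEq, List.getLast?_cons_cons] at hx hp
      exact hx ▸ hp ▸ List.isChain_pair.mp hc
  | a :: b :: c :: t, hc, hx, hp => by
      refine List.IsChain.rel_dropLast_getLast (b :: c :: t) hc.tail ?_ ?_
      · rcases t with _ | ⟨d, t⟩ <;> simpa using hx
      · simpa using hp

theorem le_max_one_csSup {A : Set ℕ} {a : ℕ} (hA : BddAbove A) (ha : a ∈ A) :
    a ≤ max 1 (sSup A) :=
  (le_csSup hA ha).trans (le_max_right _ _)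

theorem max_one_csSup_eq_one_or_mem {A : Set ℕ} (hA : BddAbove A) :
    max 1 (sSup A) = 1 ∨ max 1 (sSup A) ∈ A := by
  rcases A.eq_empty_or_nonempty with rfl | hne
  · simp
  · rcases Nat.lt_or_ge (sSup A) 1 with h | h
    · exact Or.inl (max_eq_left h.le)
    · exact Or.inr ((max_eq_right h).symm ▸ Nat.sSup_mem hne hA)

section Cups

variable {S : Finset α} {cup : α → α → α → Prop} {s : α → α → ℕ} {l : List α} {p q x : α}
  {n i : ℕ}

theorem IsCupIn.penultimate (hl : IsCupIn S cup l) (hp : EndsAt l p)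
    (hx : l.dropLast.getLast? = some x) : x ∈ S ∧ x < p :=
  ⟨hl.2.2.1 x (List.dropLast_subset l (List.mem_of_mem_getLast? hx)),
    List.IsChain.rel_dropLast_getLast l hl.2.1 hx hp⟩

theorem isCupIn_pair_s8 (hp : p ∈ S) (hq : q ∈ S) (hpq : p < q) : IsCupIn S cup [p, q] :=
  ⟨List.cons_ne_nil _ _, List.isChain_pair.mpr hpq, by simp [hp, hq], trivial⟩

theorem IsCupIn.append_of_label_le {a : ℕ} (hs : IsSlopeLabeling S cup a s)
    (hl : IsCupIn S cup l) (hp : EndsAt l p) (hq : q ∈ S) (hpq : p < q)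
    (hlabel : ∀ x, l.dropLast.getLast? = some x → s x p ≤ s p q) :
    IsCupIn S cup (l ++ [q]) := by
  have ⟨_, hchain, hmem, htriples⟩ := hl
  have hpS : p ∈ S := hmem p (List.mem_of_mem_getLast? hp)
  refine ⟨by simp, List.isChain_append.mpr ⟨hchain, List.isChain_singleton q, ?_⟩, ?_,
    Triples.append_singleton l htriples fun x y hx hy => ?_⟩
  · rw [show l.getLast? = some p from hp]
    simpa using hpq
  · simpa [or_imp, forall_and] using ⟨hmem, hq⟩
  · obtain rfl : y = p := Option.some_injective _ (hy.symm.trans hp)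
    obtain ⟨hxS, hxp⟩ := hl.penultimate hp hx
    exact hs.2 x hxS y hpS q hq hxp hpq (hlabel x hx)

theorem CupFree.bddAbove (hn : CupFree S cup n) {A : Set ℕ}
    (hA : ∀ k ∈ A, ∃ l, IsCupIn S cup l ∧ l.length = k) : BddAbove A :=
  ⟨n, fun k hk => let ⟨l, hl, hlen⟩ := hA k hk; hlen ▸ (hn l hl).le⟩

theorem betaStat_eq_one_or_exists (hn : CupFree S cup n) (p : α) :
    betaStat S cup p = 1 ∨
      ∃ l, IsCupIn S cup l ∧ EndsAt l p ∧ l.length = betaStat S cup p := by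
  unfold betaStat
  refine max_one_csSup_eq_one_or_mem (hn.bddAbove ?_)
  rintro k ⟨l, hl, -, rfl⟩
  exact ⟨l, hl, rfl⟩

theorem alphaStat_eq_one_or_exists (hn : CupFree S cup n) (p : α) :
    alphaStat S cup s i p = 1 ∨ ∃ l x, IsCupIn S cup l ∧ EndsAt l p ∧
      l.length = alphaStat S cup s i p ∧ l.dropLast.getLast? = some x ∧ s x p ≤ i := by
  unfold alphaStat
  refine max_one_csSup_eq_one_or_mem (hn.bddAbove ?_)
  rintro k ⟨l, -, hl, -, rfl, -⟩
  exact ⟨l, hl, rfl⟩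

theorem le_betaStat (hn : CupFree S cup n) (hl : IsCupIn S cup l)
    (hp : EndsAt l p) : l.length ≤ betaStat S cup p := by
  refine le_max_one_csSup (hn.bddAbove ?_) ⟨l, hl, hp, rfl⟩
  rintro k ⟨l, hl, -, rfl⟩
  exact ⟨l, hl, rfl⟩

theorem le_alphaStat (hn : CupFree S cup n) (hl : IsCupIn S cup l)
    (hp : EndsAt l p) (hx : l.dropLast.getLast? = some x) (hxp : s x p ≤ i) :
    l.length ≤ alphaStat S cup s i p := by
  refine le_max_one_csSup (hn.bddAbove ?_) ⟨l, x, hl, hp, rfl, hx, hxp⟩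
  rintro k ⟨l, -, hl, -, rfl, -⟩
  exact ⟨l, hl, rfl⟩

theorem betaStat_lt_betaStat {a : ℕ} (hn : CupFree S cup n) (hs : IsSlopeLabeling S cup a s)
    (hp : p ∈ S) (hq : q ∈ S) (hpq : p < q) (hlabel : s p q = a - 2) :
    betaStat S cup p < betaStat S cup q := by
  rcases betaStat_eq_one_or_exists hn p with h | ⟨l, hl, hpl, hlen⟩
  · have := le_betaStat (p := q) hn (isCupIn_pair_s8 hp hq hpq) rfl
    simp only [List.length_cons, List.length_nil] at this
    omega
  · have hlq : IsCupIn S cup (l ++ [q]) := hl.append_of_label_le hs hpl hq hpq fun x hx => by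
      obtain ⟨hxS, hxp⟩ := hl.penultimate hpl hx
      exact hlabel ▸ (hs.1 x hxS p hp hxp).2
    have := le_betaStat hn hlq List.getLast?_concat
    simp only [List.length_append, List.length_singleton] at this
    omega

theorem alphaStat_lt_alphaStat {a : ℕ} (hn : CupFree S cup n) (hs : IsSlopeLabeling S cup a s)
    (hp : p ∈ S) (hq : q ∈ S) (hpq : p < q) (hlabel : s p q = i) :
    alphaStat S cup s i p < alphaStat S cup s i q := by
  rcases alphaStat_eq_one_or_exists (s := s) (i := i) hn p with
    h | ⟨l, x, hl, hpl, hlen, hx, hxp⟩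
  · have := le_alphaStat (p := q) hn (isCupIn_pair_s8 hp hq hpq) rfl rfl hlabel.le
    simp only [List.length_cons, List.length_nil] at this
    omega
  · have hlq : IsCupIn S cup (l ++ [q]) := hl.append_of_label_le hs hpl hq hpq fun y hy => by
      obtain rfl : y = x := Option.some_injective _ (hy.symm.trans hx)
      exact hxp.trans hlabel.ge
    have hpen : (l ++ [q]).dropLast.getLast? = some p := by rw [List.dropLast_concat]; exact hpl
    have := le_alphaStat hn hlq List.getLast?_concat hpen hlabel.le
    simp only [List.length_append, List.length_singleton] at this
    omega

theorem label_eq_one_of_betaStat_eq (hn : CupFree S cup n) (hs : IsSlopeLabeling S cup 4 s)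
    (hp : p ∈ S) (hq : q ∈ S) (hpq : p < q) (hβ : betaStat S cup p = betaStat S cup q) :
    s p q = 1 ∧ alphaStat S cup s 1 p < alphaStat S cup s 1 q := by
  have hlabel : s p q = 1 := by
    have := hs.1 p hp q hq hpq
    by_contra h
    exact (betaStat_lt_betaStat hn hs hp hq hpq (by omega)).ne hβ
  exact ⟨hlabel, alphaStat_lt_alphaStat hn hs hp hq hpq hlabel⟩

theorem label_eq_two_of_alphaStat_eq (hn : CupFree S cup n) (hs : IsSlopeLabeling S cup 4 s)
    (hp : p ∈ S) (hq : q ∈ S) (hpq : p < q)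
    (hα : alphaStat S cup s 1 p = alphaStat S cup s 1 q) :
    s p q = 2 ∧ betaStat S cup p < betaStat S cup q := by
  have hlabel : s p q = 2 := by
    have := hs.1 p hp q hq hpq
    by_contra h
    exact (alphaStat_lt_alphaStat hn hs hp hq hpq (by omega)).ne hα
  exact ⟨hlabel, betaStat_lt_betaStat hn hs hp hq hpq hlabel⟩

end Cups

theorem forall_ne_of_forall_lt {S : Finset α} {f g : α → ℕ} {t : α → α → ℕ} {c : ℕ}
    (h : ∀ p ∈ S, ∀ q ∈ S, p < q → f p = f q → t p q = c ∧ g p < g q) :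
    ∀ p ∈ S, ∀ q ∈ S, p ≠ q → f p = f q → t (min p q) (max p q) = c ∧ (p < q ↔ g p < g q) := by
  intro p hp q hq hne hf
  rcases hne.lt_or_gt with hpq | hqp
  · obtain ⟨ht, hg⟩ := h p hp q hq hpq hf
    rw [min_eq_left hpq.le, max_eq_right hpq.le]
    exact ⟨ht, iff_of_true hpq hg⟩
  · obtain ⟨ht, hg⟩ := h q hq p hp hqp hf.symm
    rw [min_eq_right hqp.le, max_eq_left hqp.le]
    exact ⟨ht, iff_of_false hqp.asymm hg.asymm⟩

theorem stmt8_general (n : ℕ) (S : Finset α) (cup : α → α → α → Prop) (s : α → α → ℕ)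
    (hn : CupFree S cup n)
    (hs : IsSlopeLabeling S cup 4 s) :
    (∀ p ∈ S, ∀ q ∈ S, p ≠ q → betaStat S cup p = betaStat S cup q →
      s (min p q) (max p q) = 1 ∧
      (p < q ↔ alphaStat S cup s 1 p < alphaStat S cup s 1 q)) ∧
    (∀ p ∈ S, ∀ q ∈ S, p ≠ q → alphaStat S cup s 1 p = alphaStat S cup s 1 q →
      s (min p q) (max p q) = 2 ∧
      (p < q ↔ betaStat S cup p < betaStat S cup q)) :=
  ⟨forall_ne_of_forall_lt fun _ hp _ hq hpq => label_eq_one_of_betaStat_eq hn hs hp hq hpq,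
    forall_ne_of_forall_lt fun _ hp _ hq hpq => label_eq_two_of_alphaStat_eq hn hs hp hq hpq⟩

theorem stmt8 (n : ℕ) (S : Finset α) (cup : α → α → α → Prop) (s : α → α → ℕ)
    (h4 : CapFree S cup 4) (hn : CupFree S cup n)
    (hs : IsSlopeLabeling S cup 4 s) :
    (∀ p ∈ S, ∀ q ∈ S, p ≠ q → betaStat S cup p = betaStat S cup q →
      s (min p q) (max p q) = 1 ∧
      (p < q ↔ alphaStat S cup s 1 p < alphaStat S cup s 1 q)) ∧
    (∀ p ∈ S, ∀ q ∈ S, p ≠ q → alphaStat S cup s 1 p = alphaStat S cup s 1 q →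
      s (min p q) (max p q) = 2 ∧
      (p < q ↔ betaStat S cup p < betaStat S cup q)) :=
  stmt8_general n S cup s hn hs
end

section
/- Let n ≥ 3 and let S be a 4-cap-free, n-cup-free configuration. If the ending point x of an (n-1)-cup C_1 is also the starting point of another (n-1)-cup C_2, then S contains a weak (3, n-1)-gon, i.e., a 3-cap and an (n-1)-cup sharing the same two endpoints. -/
variable {α : Type*} [LinearOrder α]

/-! Write `C₁ = E ++ [p, x]` and `C₂ = x :: z :: M`. As there is no `n`-cup, `C₁` cannot be
extended by the last vertex `q` of `C₂`, nor `C₂` be preceded by the first vertex `a` of `C₁`;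
so `p x q` and `a x z` are caps. Hence a weak `(3, n-1)`-gon appears as soon as `x` can be
replaced by `p` in `C₂`, or by `z` in `C₁`, keeping a cup. If neither replacement works, then
with `w` the vertex before `p` and `z'` the vertex after `z`, both `w p z` and `p z z'` are caps,
and `w p z z'` is a `4`-cap. -/

theorem triples_append_triple {β : Type*} {f : β → β → β → Prop} (l : List β) (a b c : β) :
    Triples f (l ++ [a, b, c]) ↔ Triples f (l ++ [a, b]) ∧ f a b c := by
  induction l with
  | nil => simp [Triples]
  | cons d l ih => rcases l with _ | ⟨e, _ | ⟨g, l⟩⟩ <;> simp_all [Triples, and_assoc]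

theorem Triples.of_append_left {β : Type*} {f : β → β → β → Prop} {l₁ : List β} (l₂ : List β)
    (h : Triples f (l₁ ++ l₂)) : Triples f l₁ := by
  induction l₁ with
  | nil => trivial
  | cons d l ih => rcases l with _ | ⟨e, _ | ⟨g, l⟩⟩ <;> simp_all [Triples]

section Cups

variable {S : Finset α} {cup : α → α → α → Prop}

theorem IsCupIn.mem {l : List α} (h : IsCupIn S cup l) {a : α} (ha : a ∈ l) : a ∈ S :=
  h.2.2.1 a ha

theorem IsCupIn.isChain {l : List α} (h : IsCupIn S cup l) : l.IsChain (· < ·) :=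
  h.2.1

theorem IsCupIn.triples {l : List α} (h : IsCupIn S cup l) : Triples cup l :=
  h.2.2.2

theorem IsCupIn.pairwise {l : List α} (h : IsCupIn S cup l) : l.Pairwise (· < ·) :=
  List.isChain_iff_pairwise.mp h.isChain

theorem IsCupIn.cons_s9 {l : List α} {a : α} (h : IsCupIn S cup l) (ha : a ∈ S)
    (hlt : ∀ b ∈ l.head?, a < b) (ht : Triples cup (a :: l)) : IsCupIn S cup (a :: l) :=
  ⟨List.cons_ne_nil _ _, List.isChain_cons.mpr ⟨hlt, h.isChain⟩,
    List.forall_mem_cons.mpr ⟨ha, fun _ => h.mem⟩, ht⟩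

theorem IsCupIn.concat_s9 {l : List α} {c : α} (h : IsCupIn S cup l) (hc : c ∈ S)
    (hlt : ∀ b ∈ l.getLast?, b < c) (ht : Triples cup (l ++ [c])) : IsCupIn S cup (l ++ [c]) :=
  ⟨by simp, List.isChain_append.mpr ⟨h.isChain, List.isChain_singleton c, by simpa using hlt⟩,
    fun _ hb => (List.mem_append.mp hb).elim h.mem (fun hb => List.eq_of_mem_singleton hb ▸ hc),
    ht⟩

theorem IsCupIn.of_cons {l : List α} {a : α} (h : IsCupIn S cup (a :: l)) (hl : l ≠ []) :
    IsCupIn S cup l := by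
  obtain ⟨-, hc, hS, ht⟩ := h
  refine ⟨hl, (List.isChain_cons.mp hc).2, fun b hb => hS b (List.mem_cons_of_mem a hb), ?_⟩
  rcases l with _ | ⟨_, _ | ⟨_, _⟩⟩
  exacts [trivial, trivial, ht.2]

theorem IsCupIn.of_concat {l : List α} {c : α} (h : IsCupIn S cup (l ++ [c])) (hl : l ≠ []) :
    IsCupIn S cup l :=
  ⟨hl, (List.isChain_append.mp h.isChain).1, fun _ hb => h.mem (List.mem_append_left _ hb),
    h.triples.of_append_left _⟩

theorem isCapIn_of_not_cup {a b c : α} (ha : a ∈ S) (hb : b ∈ S) (hc : c ∈ S) (hab : a < b)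
    (hbc : b < c) (habc : ¬ cup a b c) : IsCapIn S cup [a, b, c] :=
  ⟨List.cons_ne_nil _ _, List.isChain_cons_cons.mpr ⟨hab, List.isChain_pair.mpr hbc⟩,
    by simp [ha, hb, hc], habc, trivial⟩

theorem CapFree.cup_or_cup {a b c d : α} (h4 : CapFree S cup 4) (ha : a ∈ S) (hb : b ∈ S)
    (hc : c ∈ S) (hd : d ∈ S) (hab : a < b) (hbc : b < c) (hcd : c < d) :
    cup a b c ∨ cup b c d := by
  by_contra! h
  have hcap : IsCapIn S cup [a, b, c, d] :=
    ⟨List.cons_ne_nil _ _,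
      List.isChain_cons_cons.mpr
        ⟨hab, List.isChain_cons_cons.mpr ⟨hbc, List.isChain_pair.mpr hcd⟩⟩,
      by simp [ha, hb, hc, hd], h.1, h.2, trivial⟩
  exact (h4 _ hcap).ne rfl

theorem hasWeakGon_three_of_not_cup {U : List α} {a b c : α} (hU : IsCupIn S cup U)
    (ha : StartsAt U a) (hc : EndsAt U c) (hb : b ∈ S) (hab : a < b) (hbc : b < c)
    (habc : ¬ cup a b c) : HasWeakGon S cup 3 U.length :=
  ⟨[a, b, c], U, a, c,
    isCapIn_of_not_cup (hU.mem (List.mem_of_mem_head? ha)) hb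
      (hU.mem (List.mem_of_mem_getLast? hc)) hab hbc habc,
    rfl, hU, rfl, rfl, ha, rfl, hc⟩

theorem hasWeakGon_of_triples_cons {D T : List α} {p x : α}
    (hcf : CupFree S cup ((D ++ [p, x]).length + 1)) (h₁ : IsCupIn S cup (D ++ [p, x]))
    (h₂ : IsCupIn S cup (x :: T)) (hT : T ≠ []) (ht : Triples cup (p :: T)) :
    HasWeakGon S cup 3 (x :: T).length := by
  set q := T.getLast hT
  have hxT : ∀ b ∈ T, x < b := fun _ hb => List.rel_of_pairwise_cons h₂.pairwise hb
  have hpx : p < x := List.isChain_pair.mp (List.isChain_append.mp h₁.isChain).2.1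
  have hcap : ¬ cup p x q := fun hpxq => by
    have hext : IsCupIn S cup ((D ++ [p, x]) ++ [q]) :=
      h₁.concat_s9 (h₂.mem (List.mem_cons_of_mem x (List.getLast_mem hT)))
        (by simpa using hxT q (List.getLast_mem hT))
        (by simpa using (triples_append_triple D p x q).mpr ⟨h₁.triples, hpxq⟩)
    simpa using hcf _ hext
  have hU : IsCupIn S cup (p :: T) :=
    (h₂.of_cons hT).cons_s9 (h₁.mem (by simp))
      (fun b hb => hpx.trans (hxT b (List.mem_of_mem_head? hb))) ht
  have hq : EndsAt (p :: T) q := by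
    rw [EndsAt, List.getLast?_eq_some_getLast (List.cons_ne_nil p T), List.getLast_cons hT]
  exact (hasWeakGon_three_of_not_cup hU rfl hq (h₁.mem (by simp)) hpx
    (hxT q (List.getLast_mem hT)) hcap : HasWeakGon S cup 3 (p :: T).length)

theorem hasWeakGon_of_triples_append {D M : List α} {p x z : α}
    (hcf : CupFree S cup ((x :: z :: M).length + 1)) (h₁ : IsCupIn S cup (D ++ [p, x]))
    (h₂ : IsCupIn S cup (x :: z :: M)) (ht : Triples cup (D ++ [p, z])) :
    HasWeakGon S cup 3 (D ++ [p, x]).length := by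
  set a := (D ++ [p]).head (by simp)
  have ha : a ∈ D ++ [p] := List.head_mem _
  rw [show D ++ [p, x] = (D ++ [p]) ++ [x] by simp] at h₁ ⊢
  have hltx : ∀ b ∈ D ++ [p], b < x := fun b hb =>
    (List.pairwise_append.mp h₁.pairwise).2.2 b hb x (List.mem_singleton_self x)
  have hxz : x < z := (List.isChain_cons_cons.mp h₂.isChain).1
  have hcap : ¬ cup a x z := fun haxz => by
    have hext : IsCupIn S cup (a :: x :: z :: M) :=
      h₂.cons_s9 (h₁.mem (List.mem_append_left _ ha)) (by simpa using hltx a ha) ⟨haxz, h₂.triples⟩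
    simpa using hcf _ hext
  have hU : IsCupIn S cup ((D ++ [p]) ++ [z]) :=
    (h₁.of_concat (by simp)).concat_s9 (h₂.mem (by simp))
      (fun b hb => (hltx b (List.mem_of_mem_getLast? hb)).trans hxz) (by simpa using ht)
  have ha' : StartsAt ((D ++ [p]) ++ [z]) a := by
    rw [StartsAt, List.head?_append, List.head?_eq_some_head]; rfl
  simpa using hasWeakGon_three_of_not_cup hU ha' (by simp [EndsAt]) (h₂.mem (by simp))
    (hltx a ha) hxz hcap

theorem CapFree.triples_append_or_triples_cons (h4 : CapFree S cup 4) {E M : List α}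
    {p x z : α} (h₁ : IsCupIn S cup (E ++ [p, x])) (h₂ : IsCupIn S cup (x :: z :: M)) :
    Triples cup (E ++ [p, z]) ∨ Triples cup (p :: z :: M) := by
  obtain _ | ⟨z', M⟩ := M
  · exact Or.inr trivial
  obtain rfl | ⟨F, w, rfl⟩ := E.eq_nil_or_concat'
  · exact Or.inl trivial
  simp only [List.append_assoc, List.singleton_append] at h₁ ⊢
  obtain ⟨hwp, hpx⟩ := List.isChain_cons_cons.mp (List.isChain_append.mp h₁.isChain).2.1
  obtain ⟨hxz, hzz'⟩ := List.isChain_cons_cons.mp h₂.isChain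
  rw [triples_append_triple]
  have hpz : p < z := (List.isChain_pair.mp hpx).trans hxz
  exact (h4.cup_or_cup (h₁.mem (by simp)) (h₁.mem (by simp)) (h₂.mem (by simp))
    (h₂.mem (by simp)) hwp hpz (List.isChain_cons_cons.mp hzz').1).imp
    (fun hwpz => ⟨((triples_append_triple F w p x).mp h₁.triples).1, hwpz⟩)
    (fun hpzz' => ⟨hpzz', h₂.triples.2⟩)

end Cups

theorem stmt9 (n : ℕ) (hn : 3 ≤ n) (S : Finset α) (cup : α → α → α → Prop)
    (h4 : CapFree S cup 4) (hncf : CupFree S cup n)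
    (C₁ C₂ : List α) (h1 : IsCupIn S cup C₁) (h2 : IsCupIn S cup C₂)
    (l1 : C₁.length = n - 1) (l2 : C₂.length = n - 1)
    (x : α) (hx1 : EndsAt C₁ x) (hx2 : StartsAt C₂ x) :
    HasWeakGon S cup 3 (n - 1) := by
  obtain ⟨_ | ⟨z, M⟩, rfl⟩ := List.head?_eq_some_iff.mp hx2
  · simp only [List.length_cons, List.length_nil] at l2; omega
  obtain ⟨D, rfl⟩ := List.getLast?_eq_some_iff.mp hx1
  obtain rfl | ⟨E, p, rfl⟩ := D.eq_nil_or_concat'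
  · simp only [List.length_append, List.length_nil, List.length_singleton] at l1; omega
  simp only [List.append_assoc, List.singleton_append] at h1 l1
  have hmax₁ : CupFree S cup ((E ++ [p, x]).length + 1) := by
    rwa [l1, Nat.sub_add_cancel (by omega)]
  have hmax₂ : CupFree S cup ((x :: z :: M).length + 1) := by
    rwa [l2, Nat.sub_add_cancel (by omega)]
  rcases h4.triples_append_or_triples_cons h1 h2 with hlast | hhead
  · exact l1 ▸ hasWeakGon_of_triples_append hmax₂ h1 h2 hlast
  · exact l2 ▸ hasWeakGon_of_triples_cons hmax₁ h1 h2 (List.cons_ne_nil z M) hhead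
end

section
/- Let n ≥ 3 and let S be a 4-cap-free, n-cup-free configuration of size at least C(n-1,2)+1. Let p_S be the rightmost vertex that is the left endpoint of some (n-1)-cup, and q_S the leftmost vertex that is the right endpoint of some (n-1)-cup. Then p_S ≤ q_S. -/
/-!
Suppose `qS < pS`. Let `a` precede `qS` on an `(n-1)`-cup ending at `qS`, and let `b` follow `pS`
on an `(n-1)`-cup starting at `pS`. If `a qS pS` is a cup, appending `pS` to the first cup gives
an `n`-cup; if `qS pS b` is a cup, prepending `qS` to the second does; otherwise `a qS pS b` is a
4-cap.
-/

variable {α : Type*} [LinearOrder α]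

theorem triples_append_pair {β : Type*} {f : β → β → β → Prop} {a q z : β} :
    ∀ {l : List β}, Triples f (l ++ [a, q]) → f a q z → Triples f (l ++ [a, q, z])
  | [], _, hz => ⟨hz, trivial⟩
  | [_], h, hz => ⟨h.1, hz, trivial⟩
  | [_, _], h, hz => ⟨h.1, h.2.1, hz, trivial⟩
  | _ :: y :: w :: l, h, hz => ⟨h.1, triples_append_pair (l := y :: w :: l) h.2 hz⟩

theorem exists_eq_cons_cons_of_startsAt {β : Type*} {l : List β} {p : β} (hl : 2 ≤ l.length)
    (hp : StartsAt l p) : ∃ b m, l = p :: b :: m := by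
  match l, hl, hp with
  | _ :: b :: m, _, hp => exact ⟨b, m, by simp_all [StartsAt]⟩

theorem exists_eq_append_pair_of_endsAt {β : Type*} {l : List β} {q : β} (hl : 2 ≤ l.length)
    (hq : EndsAt l q) : ∃ m a, l = m ++ [a, q] := by
  obtain ⟨b, m, hrev⟩ := exists_eq_cons_cons_of_startsAt (l := l.reverse) (p := q)
    (by simpa using hl) (by simpa [StartsAt, EndsAt, List.head?_reverse] using hq)
  exact ⟨m.reverse, b, by simpa using congrArg List.reverse hrev⟩

section Configuration

variable {S : Finset α} {cup : α → α → α → Prop}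

theorem IsCupIn.cons_cons {z p b : α} {l : List α} (hC : IsCupIn S cup (p :: b :: l))
    (hz : z ∈ S) (hzp : z < p) (hzpb : cup z p b) : IsCupIn S cup (z :: p :: b :: l) := by
  obtain ⟨-, hchain, hmem, htriples⟩ := hC
  refine ⟨List.cons_ne_nil _ _, List.isChain_cons_cons.mpr ⟨hzp, hchain⟩, ?_, hzpb, htriples⟩
  simpa [hz] using hmem

theorem IsCupIn.append_pair {l : List α} {a q z : α} (hC : IsCupIn S cup (l ++ [a, q]))
    (hz : z ∈ S) (hqz : q < z) (haqz : cup a q z) : IsCupIn S cup (l ++ [a, q, z]) := by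
  obtain ⟨-, hchain, hmem, htriples⟩ := hC
  refine ⟨by simp, ?_, ?_, triples_append_pair htriples haqz⟩
  · obtain ⟨hinit, haq, -⟩ := List.isChain_append_cons_cons.mp hchain
    exact List.isChain_append_cons_cons.mpr ⟨hinit, haq, List.isChain_pair.mpr hqz⟩
  · intro x hx
    obtain hx | rfl : x ∈ l ++ [a, q] ∨ x = z := by
      simp only [List.mem_append, List.mem_cons, List.not_mem_nil, or_false] at hx ⊢
      tauto
    exacts [hmem x hx, hz]

theorem CapFree.cup_or_cup_of_four (h : CapFree S cup 4) {a b c d : α} (ha : a ∈ S) (hb : b ∈ S)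
    (hc : c ∈ S) (hd : d ∈ S) (hab : a < b) (hbc : b < c) (hcd : c < d) :
    cup a b c ∨ cup b c d := by
  by_contra! hcap
  have hchain : [a, b, c, d].IsChain (· < ·) :=
    List.isChain_cons_cons.mpr ⟨hab, List.isChain_cons_cons.mpr ⟨hbc, List.isChain_pair.mpr hcd⟩⟩
  exact lt_irrefl _ <| h [a, b, c, d]
    ⟨List.cons_ne_nil _ _, hchain, by simp [ha, hb, hc, hd], hcap.1, hcap.2, trivial⟩

end Configuration

theorem stmt12_general (n : ℕ) (hn : 3 ≤ n) (S : Finset α) (cup : α → α → α → Prop)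
    (h4 : CapFree S cup 4) (hncf : CupFree S cup n)
    (pS qS : α)
    (hpL : ∃ C : List α, IsCupIn S cup C ∧ C.length = n - 1 ∧ StartsAt C pS)
    (hqR : ∃ C : List α, IsCupIn S cup C ∧ C.length = n - 1 ∧ EndsAt C qS) :
    pS ≤ qS := by
  obtain ⟨B, hB, hBlen, hBstart⟩ := hpL
  obtain ⟨A, hA, hAlen, hAend⟩ := hqR
  obtain ⟨b, B', rfl⟩ := exists_eq_cons_cons_of_startsAt (by omega) hBstart
  obtain ⟨A', a, rfl⟩ := exists_eq_append_pair_of_endsAt (by omega) hAend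
  by_contra! hqp
  have hmemA := hA.2.2.1
  have hmemB := hB.2.2.1
  rcases h4.cup_or_cup_of_four (hmemA a (by simp)) (hmemA qS (by simp)) (hmemB pS (by simp))
    (hmemB b (by simp)) (List.isChain_append_cons_cons.mp hA.2.1).2.1 hqp
    (List.rel_of_isChain_cons_cons hB.2.1) with hcup | hcup
  · have := hncf _ (hA.append_pair (hmemB pS (by simp)) hqp hcup)
    simp only [List.length_append, List.length_cons, List.length_nil] at this hAlen
    omega
  · have := hncf _ (hB.cons_cons (hmemA qS (by simp)) hqp hcup)
    simp only [List.length_cons] at this hBlen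
    omega

theorem stmt12 (n : ℕ) (hn : 3 ≤ n) (S : Finset α) (cup : α → α → α → Prop)
    (h4 : CapFree S cup 4) (hncf : CupFree S cup n)
    (hcard : Nat.choose (n - 1) 2 + 1 ≤ S.card)
    (pS qS : α)
    (hpL : ∃ C : List α, IsCupIn S cup C ∧ C.length = n - 1 ∧ StartsAt C pS)
    (hpMax : ∀ x : α, (∃ C : List α, IsCupIn S cup C ∧ C.length = n - 1 ∧ StartsAt C x) → x ≤ pS)
    (hqR : ∃ C : List α, IsCupIn S cup C ∧ C.length = n - 1 ∧ EndsAt C qS)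
    (hqMin : ∀ x : α, (∃ C : List α, IsCupIn S cup C ∧ C.length = n - 1 ∧ EndsAt C x) → qS ≤ x) :
    pS ≤ qS :=
  stmt12_general n hn S cup h4 hncf pS qS hpL hqR
end
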